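/- Let q ≥ 3 and r, r' ≥ 1. If (S0, S1) is a spherical bitrade in the Hamming graph H(qr, q) and (S0', S1') is a spherical bitrade in H(qr', q), then (S0 × S0' ∪ S1 × S1', S0 × S1' ∪ S1 × S0') is a spherical bitrade in H(q(r+r'), q), where C × D = {x|y : x ∈ C, y ∈ D} and x|y denotes the concatenation of the tuples x and y. -/

import Mathlib

open scoped BigOperators

/-- The ball of radius 1 centered at `x` in a graph `G`. -/
def ball1 {V : Type*} (G : SimpleGraph V) (x : V) : Set V := {y | y = x ∨ G.Adj x y}

/-- A perfect one-error-correcting code: the balls of radius 1 centered at the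
vertices of `C` partition the vertex set. -/
def IsPerfectCode {V : Type*} (G : SimpleGraph V) (C : Set V) : Prop :=
  ∀ x : V, ∃! c, c ∈ C ∧ c ∈ ball1 G x

/-- A perfect bitrade: a pair of disjoint nonempty vertex sets such that every ball of
radius 1 contains exactly one vertex of each, or none of either. -/
def IsPerfectBitrade {V : Type*} (G : SimpleGraph V) (T0 T1 : Set V) : Prop :=
  Disjoint T0 T1 ∧ T0.Nonempty ∧ T1.Nonempty ∧
    ∀ x : V,
      ((∃! y, y ∈ T0 ∧ y ∈ ball1 G x) ∧ (∃! y, y ∈ T1 ∧ y ∈ ball1 G x)) ∨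
        (∀ y, y ∈ T0 ∪ T1 → y ∉ ball1 G x)

/-- A spherical bitrade: a pair of disjoint nonempty vertex sets such that every sphere of
radius 1 contains exactly one vertex of each, or none of either. -/
def IsSphericalBitrade {V : Type*} (G : SimpleGraph V) (S0 S1 : Set V) : Prop :=
  Disjoint S0 S1 ∧ S0.Nonempty ∧ S1.Nonempty ∧
    ∀ x : V,
      ((∃! y, y ∈ S0 ∧ G.Adj x y) ∧ (∃! y, y ∈ S1 ∧ G.Adj x y)) ∨
        (∀ y, y ∈ S0 ∪ S1 → ¬ G.Adj x y)

/-- The Hamming graph `H(n,q)`: vertices are `n`-tuples over an alphabet of size `q`,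
adjacent iff they differ in exactly one coordinate. -/
def hammingGraph (n q : ℕ) : SimpleGraph (Fin n → Fin q) where
  Adj x y := hammingDist x y = 1
  symm := ⟨fun x y (h : hammingDist x y = 1) => (hammingDist_comm y x).trans h⟩
  loopless := ⟨fun x (h : hammingDist x x = 1) => by simp [hammingDist_self] at h⟩

/-- `f` is a `μ`-eigenfunction of `G`: `f` is not identically zero and
`μ · f x = ∑_{y ∈ O(x)} f y` for every vertex `x`. -/
def IsEigenfun {V : Type*} (G : SimpleGraph V) (μ : ℝ) (f : V → ℝ) : Prop :=
  f ≠ 0 ∧ ∀ x : V, μ * f x = ∑ᶠ y ∈ G.neighborSet x, f y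

/-- The characteristic function of a set of vertices. -/
noncomputable def chi {V : Type*} (C : Set V) : V → ℝ := Set.indicator C 1

/-- The code `C` has minimum (graph) distance exactly `d`. -/
def HasMinDist {V : Type*} (G : SimpleGraph V) (C : Set V) (d : ℕ) : Prop :=
  (∀ x ∈ C, ∀ y ∈ C, x ≠ y → (d : ℕ∞) ≤ G.edist x y) ∧
    ∃ x ∈ C, ∃ y ∈ C, x ≠ y ∧ G.edist x y = d

/-- The code `C` of `n`-tuples has minimum Hamming distance exactly `d`. -/
def HasMinHDist {n q : ℕ} (C : Set (Fin n → Fin q)) (d : ℕ) : Prop :=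
  (∀ x ∈ C, ∀ y ∈ C, x ≠ y → d ≤ hammingDist x y) ∧
    ∃ x ∈ C, ∃ y ∈ C, x ≠ y ∧ hammingDist x y = d

/-- `G` is distance-regular with intersection numbers `p i j k`. -/
def IsDistRegular {V : Type*} (G : SimpleGraph V) (p : ℕ → ℕ → ℕ → ℕ) : Prop :=
  G.Connected ∧ ∀ (i j k : ℕ) (x y : V), G.edist x y = k →
    {z : V | G.edist x z = i ∧ G.edist z y = j}.ncard = p i j k

/-! For `q ≥ 3` every edge of a Hamming graph lies in a triangle, and a common neighbour of two
adjacent vertices of `S0` would see two vertices of `S0`; so the support `S0 ∪ S1` of a spherical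
bitrade is independent. Since `H(m+n,q) ≅ H(m,q) □ H(n,q)`, the neighbours of `x|y` are the `x'|y`
with `x' ~ x` and the `x|y'` with `y' ~ y`. By independence, either one factor vertex lies in the
support of its bitrade and the other sees it exactly once in each part, and then the neighbours of
`x|y` in both product parts come from that factor alone, or `x|y` sees neither product part. -/

open SimpleGraph

theorem hammingDist_eq_one_iff {ι : Type*} {β : ι → Type*} [Fintype ι] [DecidableEq ι]
    [∀ i, DecidableEq (β i)] {x y : ∀ i, β i} :
    hammingDist x y = 1 ↔ ∃ i, x i ≠ y i ∧ ∀ j, x j ≠ y j → j = i := by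
  simp [hammingDist, Finset.card_eq_one, Finset.eq_singleton_iff_unique_mem]

theorem hammingDist_append {α : Type*} [DecidableEq α] {m n : ℕ} (x u : Fin m → α)
    (y v : Fin n → α) :
    hammingDist (Fin.append x y) (Fin.append u v) = hammingDist x u + hammingDist y v := by
  simp [hammingDist, Finset.card_filter, Fin.sum_univ_add]

namespace SimpleGraph

variable {α β : Type*} {G : SimpleGraph α} {H : SimpleGraph β}

theorem boxProd_existsUnique_adj_left {A B : Set α} {P Q : Set β} {x : α} {y : β}
    (hyP : y ∈ P) (hyQ : y ∉ Q) (hy : ∀ v ∈ P ∪ Q, ¬ H.Adj y v)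
    (hx : ∃! u, u ∈ A ∧ G.Adj x u) :
    ∃! w, w ∈ A ×ˢ P ∪ B ×ˢ Q ∧ (G □ H).Adj (x, y) w := by
  obtain ⟨u, ⟨huA, hxu⟩, huniq⟩ := hx
  refine ⟨(u, y), ⟨Or.inl ⟨huA, hyP⟩, boxProd_adj_left.2 hxu⟩, ?_⟩
  rintro ⟨u', v'⟩ ⟨hmem, ⟨hxu', rfl⟩ | ⟨hyv', -⟩⟩
  · have hu'A : u' ∈ A := hmem.elim And.left fun h => absurd h.2 hyQ
    rw [huniq u' ⟨hu'A, hxu'⟩]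
  · exact absurd hyv' (hy v' (hmem.imp And.right And.right))

theorem boxProd_existsUnique_adj_right {A B : Set α} {P Q : Set β} {x : α} {y : β}
    (hxA : x ∈ A) (hxB : x ∉ B) (hx : ∀ u ∈ A ∪ B, ¬ G.Adj x u)
    (hy : ∃! v, v ∈ P ∧ H.Adj y v) :
    ∃! w, w ∈ A ×ˢ P ∪ B ×ˢ Q ∧ (G □ H).Adj (x, y) w := by
  obtain ⟨v, ⟨hvP, hyv⟩, huniq⟩ := hy
  refine ⟨(x, v), ⟨Or.inl ⟨hxA, hvP⟩, boxProd_adj_right.2 hyv⟩, ?_⟩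
  rintro ⟨u', v'⟩ ⟨hmem, ⟨hxu', -⟩ | ⟨hyv', rfl⟩⟩
  · exact absurd hxu' (hx u' (hmem.imp And.left And.left))
  · have hv'P : v' ∈ P := hmem.elim And.right fun h => absurd h.1 hxB
    rw [huniq v' ⟨hv'P, hyv'⟩]

theorem boxProd_not_adj_of_forall {S : Set α} {S' : Set β} {x : α} {y : β}
    (hx : ∀ u ∈ S, G.Adj x u → y ∉ S') (hy : ∀ v ∈ S', H.Adj y v → x ∉ S) :
    ∀ w ∈ S ×ˢ S', ¬ (G □ H).Adj (x, y) w := by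
  rintro ⟨u, v⟩ ⟨hu, hv⟩ (⟨hxu, rfl⟩ | ⟨hyv, rfl⟩)
  · exact hx u hu hxu hv
  · exact hy v hv hyv hu

theorem boxProd_existsUnique_adj_left_pair {S0 S1 : Set α} {S0' S1' : Set β}
    {x : α} {y : β} (hdisj' : Disjoint S0' S1') (hy : y ∈ S0' ∪ S1')
    (hyS : ∀ v ∈ S0' ∪ S1', ¬ H.Adj y v)
    (hx0 : ∃! u, u ∈ S0 ∧ G.Adj x u) (hx1 : ∃! u, u ∈ S1 ∧ G.Adj x u) :
    (∃! w, w ∈ S0 ×ˢ S0' ∪ S1 ×ˢ S1' ∧ (G □ H).Adj (x, y) w) ∧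
      ∃! w, w ∈ S0 ×ˢ S1' ∪ S1 ×ˢ S0' ∧ (G □ H).Adj (x, y) w := by
  rcases hy with hy0 | hy1
  · have hy1 := hdisj'.notMem_of_mem_left hy0
    rw [Set.union_comm (S0 ×ˢ S1')]
    exact ⟨boxProd_existsUnique_adj_left hy0 hy1 hyS hx0,
      boxProd_existsUnique_adj_left hy0 hy1 hyS hx1⟩
  · have hy0 := hdisj'.notMem_of_mem_right hy1
    have hyS' : ∀ v ∈ S1' ∪ S0', ¬ H.Adj y v := fun v hv => hyS v hv.symm
    rw [Set.union_comm (S0 ×ˢ S0')]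
    exact ⟨boxProd_existsUnique_adj_left hy1 hy0 hyS' hx1,
      boxProd_existsUnique_adj_left hy1 hy0 hyS' hx0⟩

theorem boxProd_existsUnique_adj_right_pair {S0 S1 : Set α} {S0' S1' : Set β}
    {x : α} {y : β} (hdisj : Disjoint S0 S1) (hx : x ∈ S0 ∪ S1)
    (hxS : ∀ u ∈ S0 ∪ S1, ¬ G.Adj x u)
    (hy0 : ∃! v, v ∈ S0' ∧ H.Adj y v) (hy1 : ∃! v, v ∈ S1' ∧ H.Adj y v) :
    (∃! w, w ∈ S0 ×ˢ S0' ∪ S1 ×ˢ S1' ∧ (G □ H).Adj (x, y) w) ∧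
      ∃! w, w ∈ S0 ×ˢ S1' ∪ S1 ×ˢ S0' ∧ (G □ H).Adj (x, y) w := by
  rcases hx with hx0 | hx1
  · have hx1 := hdisj.notMem_of_mem_left hx0
    exact ⟨boxProd_existsUnique_adj_right hx0 hx1 hxS hy0,
      boxProd_existsUnique_adj_right hx0 hx1 hxS hy1⟩
  · have hx0 := hdisj.notMem_of_mem_right hx1
    have hxS' : ∀ u ∈ S1 ∪ S0, ¬ G.Adj x u := fun u hu => hxS u hu.symm
    rw [Set.union_comm (S0 ×ˢ S0'), Set.union_comm (S0 ×ˢ S1')]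
    exact ⟨boxProd_existsUnique_adj_right hx1 hx0 hxS' hy1,
      boxProd_existsUnique_adj_right hx1 hx0 hxS' hy0⟩

end SimpleGraph

namespace IsSphericalBitrade

variable {α β : Type*} {G : SimpleGraph α} {H : SimpleGraph β}
  {S0 S1 : Set α} {S0' S1' : Set β}

theorem symm (h : IsSphericalBitrade G S0 S1) : IsSphericalBitrade G S1 S0 :=
  ⟨h.1.symm, h.2.2.1, h.2.1, fun x => (h.2.2.2 x).imp And.symm
    fun hx y hy => hx y (Set.union_comm S1 S0 ▸ hy)⟩

theorem map {G' : SimpleGraph β} (e : G ≃g G') (h : IsSphericalBitrade G S0 S1) :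
    IsSphericalBitrade G' (e '' S0) (e '' S1) := by
  obtain ⟨hdisj, hS0, hS1, hloc⟩ := h
  refine ⟨(Set.disjoint_image_iff e.injective).2 hdisj, hS0.image e, hS1.image e,
    e.surjective.forall.2 fun x => ?_⟩
  have hunique : ∀ S : Set α,
      (∃! y, y ∈ S ∧ G.Adj x y) ↔ ∃! y', y' ∈ e '' S ∧ G'.Adj (e x) y' := fun S =>
    e.toEquiv.existsUnique_congr fun _ => (and_congr e.injective.mem_set_image e.map_adj_iff).symm
  rw [← hunique, ← hunique, ← Set.image_union, Set.forall_mem_image]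
  simpa only [e.map_adj_iff] using hloc x

theorem not_adj_of_mem_left (h : IsSphericalBitrade G S0 S1)
    (hG : ∀ a b, G.Adj a b → ∃ w, G.Adj w a ∧ G.Adj w b) {a b : α} (ha : a ∈ S0)
    (hb : b ∈ S0) : ¬ G.Adj a b := by
  intro hab
  obtain ⟨w, hwa, hwb⟩ := hG a b hab
  rcases h.2.2.2 w with ⟨⟨_, _, huniq⟩, _⟩ | hnone
  · exact G.ne_of_adj hab ((huniq a ⟨ha, hwa⟩).trans (huniq b ⟨hb, hwb⟩).symm)
  · exact hnone a (Or.inl ha) hwa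

theorem isIndepSet_union (h : IsSphericalBitrade G S0 S1)
    (hG : ∀ a b, G.Adj a b → ∃ w, G.Adj w a ∧ G.Adj w b) : G.IsIndepSet (S0 ∪ S1) := by
  have hcross : ∀ {T0 T1 : Set α}, IsSphericalBitrade G T0 T1 →
      ∀ {a b}, a ∈ T0 → b ∈ T1 → ¬ G.Adj a b := by
    intro T0 T1 hT a b ha hb hab
    rcases hT.2.2.2 a with ⟨⟨u, ⟨hu, hau⟩, _⟩, _⟩ | hnone
    · exact hT.not_adj_of_mem_left hG ha hu hau
    · exact hnone b (Or.inr hb) hab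
  rintro a (ha | ha) b (hb | hb) -
  · exact h.not_adj_of_mem_left hG ha hb
  · exact hcross h ha hb
  · exact hcross h.symm ha hb
  · exact h.symm.not_adj_of_mem_left hG ha hb

theorem boxProd (h : IsSphericalBitrade G S0 S1) (hS : G.IsIndepSet (S0 ∪ S1))
    (h' : IsSphericalBitrade H S0' S1') (hS' : H.IsIndepSet (S0' ∪ S1')) :
    IsSphericalBitrade (G □ H) (S0 ×ˢ S0' ∪ S1 ×ˢ S1') (S0 ×ˢ S1' ∪ S1 ×ˢ S0') := by
  obtain ⟨a0, ha0⟩ := h.2.1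
  obtain ⟨b0, hb0⟩ := h'.2.1
  obtain ⟨b1, hb1⟩ := h'.2.2.1
  refine ⟨Set.disjoint_left.2 ?_, ⟨(a0, b0), .inl ⟨ha0, hb0⟩⟩, ⟨(a0, b1), .inl ⟨ha0, hb1⟩⟩, ?_⟩
  · rintro ⟨u, v⟩ (⟨hu, hv⟩ | ⟨hu, hv⟩) (⟨hu', hv'⟩ | ⟨hu', hv'⟩)
    exacts [h'.1.notMem_of_mem_left hv hv', h.1.notMem_of_mem_left hu hu',
      h.1.notMem_of_mem_left hu' hu, h'.1.notMem_of_mem_left hv' hv]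
  rintro ⟨x, y⟩
  have hxIndep : x ∈ S0 ∪ S1 → ∀ u ∈ S0 ∪ S1, ¬ G.Adj x u :=
    fun hx u hu hxu => hS hx hu (G.ne_of_adj hxu) hxu
  have hyIndep : y ∈ S0' ∪ S1' → ∀ v ∈ S0' ∪ S1', ¬ H.Adj y v :=
    fun hy v hv hyv => hS' hy hv (H.ne_of_adj hyv) hyv
  have hnone : (∀ u ∈ S0 ∪ S1, G.Adj x u → y ∉ S0' ∪ S1') →
      (∀ v ∈ S0' ∪ S1', H.Adj y v → x ∉ S0 ∪ S1) →
      ∀ w ∈ S0 ×ˢ S0' ∪ S1 ×ˢ S1' ∪ (S0 ×ˢ S1' ∪ S1 ×ˢ S0'), ¬ (G □ H).Adj (x, y) w := by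
    refine fun hx hy w hw => boxProd_not_adj_of_forall hx hy w ?_
    rcases hw with (⟨hu, hv⟩ | ⟨hu, hv⟩) | (⟨hu, hv⟩ | ⟨hu, hv⟩)
    exacts [⟨.inl hu, .inl hv⟩, ⟨.inr hu, .inr hv⟩, ⟨.inl hu, .inr hv⟩, ⟨.inr hu, .inl hv⟩]
  rcases h.2.2.2 x with ⟨hx0, hx1⟩ | hxe
  · obtain ⟨u, hu, hxu⟩ := hx0.exists
    have hx : x ∉ S0 ∪ S1 := fun hx => hxIndep hx u (.inl hu) hxu
    by_cases hy : y ∈ S0' ∪ S1'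
    · exact .inl (boxProd_existsUnique_adj_left_pair h'.1 hy (hyIndep hy) hx0 hx1)
    · exact .inr (hnone (fun _ _ _ => hy) fun _ _ _ => hx)
  rcases h'.2.2.2 y with ⟨hy0, hy1⟩ | hye
  · obtain ⟨v, hv, hyv⟩ := hy0.exists
    have hy : y ∉ S0' ∪ S1' := fun hy => hyIndep hy v (.inl hv) hyv
    by_cases hx : x ∈ S0 ∪ S1
    · exact .inl (boxProd_existsUnique_adj_right_pair h.1 hx (hxIndep hx) hy0 hy1)
    · exact .inr (hnone (fun _ _ _ => hy) fun _ _ _ => hx)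
  exact .inr (hnone (fun u hu hxu => absurd hxu (hxe u hu)) fun v hv hyv => absurd hyv (hye v hv))

end IsSphericalBitrade

theorem hammingGraph.exists_adj_adj_of_adj {n q : ℕ} (hq : 3 ≤ q) {a b : Fin n → Fin q}
    (hab : (hammingGraph n q).Adj a b) :
    ∃ w, (hammingGraph n q).Adj w a ∧ (hammingGraph n q).Adj w b := by
  obtain ⟨i, hi, hdiff⟩ := hammingDist_eq_one_iff.1 hab
  obtain ⟨c, -, hc⟩ := Finset.exists_mem_notMem_of_card_lt_card (s := {a i, b i})
    (t := Finset.univ) (by simpa using Finset.card_le_two.trans_lt (by omega))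
  rw [Finset.mem_insert, Finset.mem_singleton, not_or] at hc
  refine ⟨Function.update a i c, hammingDist_eq_one_iff.2 ⟨i, by simpa using hc.1, fun j hj => ?_⟩,
    hammingDist_eq_one_iff.2 ⟨i, by simpa using hc.2, fun j hj => ?_⟩⟩
  · by_contra hji
    exact hj (Function.update_of_ne hji c a)
  · by_contra hji
    rw [Function.update_of_ne hji c a] at hj
    exact hji (hdiff j hj)

def hammingGraph.appendIso (m n q : ℕ) :
    (hammingGraph m q).boxProd (hammingGraph n q) ≃g hammingGraph (m + n) q where
  toEquiv := Fin.appendEquiv m n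
  map_rel_iff' {p p'} := by
    change hammingDist (Fin.append p.1 p.2) (Fin.append p'.1 p'.2) = 1 ↔
      hammingDist p.1 p'.1 = 1 ∧ p.2 = p'.2 ∨ hammingDist p.2 p'.2 = 1 ∧ p.1 = p'.1
    rw [hammingDist_append, ← hammingDist_eq_zero, ← hammingDist_eq_zero]
    omega

theorem IsSphericalBitrade.hammingGraph_append {q m n N : ℕ} (hq : 3 ≤ q) (hN : N = m + n)
    {S0 S1 : Set (Fin m → Fin q)} {S0' S1' : Set (Fin n → Fin q)}
    (h : IsSphericalBitrade (hammingGraph m q) S0 S1)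
    (h' : IsSphericalBitrade (hammingGraph n q) S0' S1') :
    IsSphericalBitrade (hammingGraph N q)
      (Set.image2 (fun x y i => Fin.append x y (Fin.cast hN i)) S0 S0' ∪
        Set.image2 (fun x y i => Fin.append x y (Fin.cast hN i)) S1 S1')
      (Set.image2 (fun x y i => Fin.append x y (Fin.cast hN i)) S0 S1' ∪
        Set.image2 (fun x y i => Fin.append x y (Fin.cast hN i)) S1 S0') := by
  subst hN
  have hbox := h.boxProd (h.isIndepSet_union fun _ _ => hammingGraph.exists_adj_adj_of_adj hq)
    h' (h'.isIndepSet_union fun _ _ => hammingGraph.exists_adj_adj_of_adj hq)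
  simp only [← Set.image_uncurry_prod, ← Set.image_union]
  exact hbox.map (hammingGraph.appendIso m n q)

theorem statement9_general (q r r' : ℕ) (hq : 3 ≤ q)
    (S0 S1 : Set (Fin (q * r) → Fin q)) (S0' S1' : Set (Fin (q * r') → Fin q))
    (h : IsSphericalBitrade (hammingGraph (q * r) q) S0 S1)
    (h' : IsSphericalBitrade (hammingGraph (q * r') q) S0' S1') :
    IsSphericalBitrade (hammingGraph (q * (r + r')) q)
      (Set.image2 (fun x y i => Fin.append x y (Fin.cast (Nat.mul_add q r r') i)) S0 S0' ∪
        Set.image2 (fun x y i => Fin.append x y (Fin.cast (Nat.mul_add q r r') i)) S1 S1')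
      (Set.image2 (fun x y i => Fin.append x y (Fin.cast (Nat.mul_add q r r') i)) S0 S1' ∪
        Set.image2 (fun x y i => Fin.append x y (Fin.cast (Nat.mul_add q r r') i)) S1 S0') :=
  h.hammingGraph_append hq (Nat.mul_add q r r') h'

/-- If `(S0,S1)` and `(S0',S1')` are spherical bitrades in `H(qr,q)` and
`H(qr',q)` respectively, then `(S0 × S0' ∪ S1 × S1', S0 × S1' ∪ S1 × S0')` is a spherical
bitrade in `H(q(r+r'),q)`, where `×` is concatenation of tuples. -/
theorem statement9 (q r r' : ℕ) (hq : 3 ≤ q) (hr : 1 ≤ r) (hr' : 1 ≤ r')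
    (S0 S1 : Set (Fin (q * r) → Fin q)) (S0' S1' : Set (Fin (q * r') → Fin q))
    (h : IsSphericalBitrade (hammingGraph (q * r) q) S0 S1)
    (h' : IsSphericalBitrade (hammingGraph (q * r') q) S0' S1') :
    IsSphericalBitrade (hammingGraph (q * (r + r')) q)
      (Set.image2 (fun x y i => Fin.append x y (Fin.cast (Nat.mul_add q r r') i)) S0 S0' ∪
        Set.image2 (fun x y i => Fin.append x y (Fin.cast (Nat.mul_add q r r') i)) S1 S1')
      (Set.image2 (fun x y i => Fin.append x y (Fin.cast (Nat.mul_add q r r') i)) S0 S1' ∪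
        Set.image2 (fun x y i => Fin.append x y (Fin.cast (Nat.mul_add q r r') i)) S1 S0') :=
  statement9_general q r r' hq S0 S1 S0' S1' h h'
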